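/- arXiv:2505.04234 — 2 statements merged into one kernel-verified Lean document; each statement's English description precedes it below -/
import Mathlib

section
/- Let ψ₁, ψ₂ be unit vectors in a complex inner product space, let |y₁⟩, |y₂⟩ be orthonormal vectors, and suppose |⟨ψ₁, y₁⟩|² ≥ 1 − ε and |⟨ψ₂, y₂⟩|² ≥ 1 − ε with ε < 1/2. Then |⟨ψ₁, ψ₂⟩| ≤ 2√(ε(1−ε)) + ε ≤ 2√ε + ε. -/
/-!
Write `ψ₁ = c • y₁ + r` with `c = ⟪y₁, ψ₁⟫`. Pythagoras gives `‖r‖² = 1 - |c|² ≤ ε`, and Bessel's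
inequality for the orthonormal pair `y₁, y₂` gives `|⟪y₁, ψ₂⟫|² ≤ 1 - |⟪y₂, ψ₂⟫|² ≤ ε`. Hence
`|⟪ψ₁, ψ₂⟫| ≤ ‖r‖ + |c| |⟪y₁, ψ₂⟫| ≤ 2√ε`, and for `ε ≤ 1/2` elementary algebra shows
`2√ε ≤ 2√(ε(1-ε)) + ε`.
-/

section InnerProduct

variable {𝕜 E : Type*} [RCLike 𝕜] [NormedAddCommGroup E] [InnerProductSpace 𝕜 E]

local notation "⟪" x ", " y "⟫" => inner 𝕜 x y

theorem norm_sub_inner_smul_sq_of_norm_eq_one {y : E} (hy : ‖y‖ = 1) (x : E) :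
    ‖x - ⟪y, x⟫ • y‖ ^ 2 = ‖x‖ ^ 2 - ‖⟪y, x⟫‖ ^ 2 := by
  have h := (𝕜 ∙ y).norm_sq_eq_add_norm_sq_starProjection x
  rw [Submodule.starProjection_orthogonal_val, Submodule.starProjection_unit_singleton 𝕜 hy,
    norm_smul, hy, mul_one] at h
  linarith

theorem norm_inner_le_norm_sub_inner_smul_add (x y z : E) :
    ‖⟪x, z⟫‖ ≤ ‖x - ⟪y, x⟫ • y‖ * ‖z‖ + ‖⟪y, x⟫‖ * ‖⟪y, z⟫‖ := by
  have hsplit : ⟪x, z⟫ = ⟪x - ⟪y, x⟫ • y, z⟫ + starRingEnd 𝕜 ⟪y, x⟫ * ⟪y, z⟫ := by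
    rw [inner_sub_left, inner_smul_left]
    ring
  calc ‖⟪x, z⟫‖ ≤ ‖⟪x - ⟪y, x⟫ • y, z⟫‖ + ‖starRingEnd 𝕜 ⟪y, x⟫ * ⟪y, z⟫‖ := hsplit ▸ norm_add_le _ _
    _ ≤ ‖x - ⟪y, x⟫ • y‖ * ‖z‖ + ‖⟪y, x⟫‖ * ‖⟪y, z⟫‖ := by
      rw [norm_mul, RCLike.norm_conj]
      gcongr
      exact norm_inner_le_norm _ _

theorem norm_inner_sq_add_norm_inner_sq_le {y₁ y₂ : E} (hy₁ : ‖y₁‖ = 1) (hy₂ : ‖y₂‖ = 1)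
    (hortho : ⟪y₁, y₂⟫ = 0) (x : E) :
    ‖⟪y₁, x⟫‖ ^ 2 + ‖⟪y₂, x⟫‖ ^ 2 ≤ ‖x‖ ^ 2 := by
  have hon : Orthonormal 𝕜 ![y₁, y₂] := by
    rw [orthonormal_iff_ite]
    intro i j
    fin_cases i <;> fin_cases j <;>
      simp [inner_self_eq_norm_sq_to_K, hy₁, hy₂, hortho, inner_eq_zero_symm.mp hortho]
  simpa [Fin.sum_univ_two] using hon.sum_inner_products_le (x := x) (s := Finset.univ)

end InnerProduct

theorem two_mul_sqrt_le_two_mul_sqrt_mul_one_sub_add {ε : ℝ} (h0 : 0 ≤ ε) (h : ε ≤ 1 / 2) :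
    2 * √ε ≤ 2 * √(ε * (1 - ε)) + ε := by
  rw [Real.sqrt_mul h0]
  set s := √ε
  set t := √(1 - ε)
  have hs : s ^ 2 = ε := Real.sq_sqrt h0
  have ht : t ^ 2 = 1 - ε := Real.sq_sqrt (by linarith)
  have hs0 : 0 ≤ s := Real.sqrt_nonneg _
  have hst : s ≤ t := Real.sqrt_le_sqrt (by linarith)
  -- `(2t + s)² ≥ 4t² + 5s² ≥ 4(t² + s²) = 4`, so `2(1 - t) ≤ s`
  have hkey : 2 ≤ 2 * t + s := by nlinarith
  nlinarith

/-- feature states with high overlap with orthonormal label vectors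
are nearly orthogonal. -/
theorem stmt_4 {E : Type*} [NormedAddCommGroup E] [InnerProductSpace ℂ E]
    (ψ₁ ψ₂ y₁ y₂ : E) (hψ₁ : ‖ψ₁‖ = 1) (hψ₂ : ‖ψ₂‖ = 1)
    (hy₁ : ‖y₁‖ = 1) (hy₂ : ‖y₂‖ = 1) (hortho : (inner ℂ y₁ y₂ : ℂ) = 0)
    (ε : ℝ) (hε : ε < 1 / 2)
    (h₁ : 1 - ε ≤ ‖(inner ℂ ψ₁ y₁ : ℂ)‖ ^ 2)
    (h₂ : 1 - ε ≤ ‖(inner ℂ ψ₂ y₂ : ℂ)‖ ^ 2) :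
    ‖(inner ℂ ψ₁ ψ₂ : ℂ)‖ ≤ 2 * Real.sqrt (ε * (1 - ε)) + ε ∧
    2 * Real.sqrt (ε * (1 - ε)) + ε ≤ 2 * Real.sqrt ε + ε := by
  rw [norm_inner_symm] at h₁ h₂
  have hc : ‖(inner ℂ y₁ ψ₁ : ℂ)‖ ≤ 1 := by
    simpa [hy₁, hψ₁] using norm_inner_le_norm (𝕜 := ℂ) y₁ ψ₁
  have hε0 : 0 ≤ ε := by nlinarith [norm_nonneg (inner ℂ y₁ ψ₁ : ℂ)]
  have hr : ‖ψ₁ - (inner ℂ y₁ ψ₁ : ℂ) • y₁‖ ≤ √ε := by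
    rw [Real.le_sqrt (norm_nonneg _) hε0, norm_sub_inner_smul_sq_of_norm_eq_one hy₁, hψ₁]
    linarith
  have hs : ‖(inner ℂ y₁ ψ₂ : ℂ)‖ ≤ √ε := by
    have := norm_inner_sq_add_norm_inner_sq_le hy₁ hy₂ hortho ψ₂
    rw [Real.le_sqrt (norm_nonneg _) hε0]
    linarith [hψ₂ ▸ this]
  refine ⟨?_, by gcongr; nlinarith⟩
  calc ‖(inner ℂ ψ₁ ψ₂ : ℂ)‖
      ≤ ‖ψ₁ - (inner ℂ y₁ ψ₁ : ℂ) • y₁‖ * ‖ψ₂‖ + ‖(inner ℂ y₁ ψ₁ : ℂ)‖ * ‖(inner ℂ y₁ ψ₂ : ℂ)‖ :=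
        norm_inner_le_norm_sub_inner_smul_add ψ₁ y₁ ψ₂
    _ ≤ √ε * 1 + 1 * √ε := by rw [hψ₂]; gcongr
    _ = 2 * √ε := by ring
    _ ≤ 2 * √(ε * (1 - ε)) + ε := two_mul_sqrt_le_two_mul_sqrt_mul_one_sub_add hε0 hε.le
end

section
/- Let K be a symmetric positive definite M×M real matrix with smallest eigenvalue λ_min > 0, and let K' be symmetric positive definite with ‖K' − K‖_F ≤ ε' < λ_min. Let x₀ minimize ½xᵀKx − cᵀx over the feasible set {x : Gx ≥ g, Dx = d}, and x₀' the minimizer with K replaced by K'. Then ‖x₀' − x₀‖₂ ≤ ε'/(λ_min − ε') · (1 + ‖x₀‖₂). -/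
/-!
Both minimizers satisfy the first-order variational inequality over the convex feasible set;
adding the two inequalities gives `u ⬝ᵥ (K' x₀' - K x₀) ≤ 0` for `u = x₀' - x₀`. Since
`K' x₀' - K x₀ = K u - (K - K') (u + x₀)`, the bound `λ ‖u‖² ≤ uᵀ K u` together with
`|uᵀ E v| ≤ ‖E‖_F ‖u‖ ‖v‖` yields `λ ‖u‖² ≤ ε' ‖u‖ (‖u‖ + ‖x₀‖)`, that is
`‖u‖ ≤ ε' ‖x₀‖ / (λ - ε')`.
-/

open Filter Topology Set Matrix

theorem nonneg_of_forall_add_mul_nonneg {a b : ℝ} (h : ∀ t ∈ Ioc (0 : ℝ) 1, 0 ≤ a + t * b) :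
    0 ≤ a := by
  have hlim : Tendsto (fun t : ℝ => a + t * b) (𝓝[>] 0) (𝓝 a) := by
    have : Continuous fun t : ℝ => a + t * b := by fun_prop
    simpa using (this.tendsto 0).mono_left nhdsWithin_le_nhds
  exact ge_of_tendsto hlim (eventually_of_mem (Ioc_mem_nhdsGT one_pos) h)

section QuadraticProgram

variable {ι : Type*} [Fintype ι]

noncomputable def quadObjective (A : Matrix ι ι ℝ) (c x : ι → ℝ) : ℝ :=
  1 / 2 * x ⬝ᵥ A *ᵥ x - c ⬝ᵥ x

theorem quadObjective_add_smul {A : Matrix ι ι ℝ} (hA : A.IsHermitian) (c p w : ι → ℝ) (t : ℝ) :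
    quadObjective A c (p + t • w) =
      quadObjective A c p + t * (w ⬝ᵥ (A *ᵥ p - c)) + t ^ 2 / 2 * (w ⬝ᵥ A *ᵥ w) := by
  have hsymm : p ⬝ᵥ A *ᵥ w = w ⬝ᵥ A *ᵥ p := by
    rw [dotProduct_mulVec, ← mulVec_transpose, (isHermitian_iff_isSymm.1 hA).eq, dotProduct_comm]
  simp only [quadObjective, mulVec_add, mulVec_smul, dotProduct_add, add_dotProduct,
    dotProduct_smul, smul_dotProduct, dotProduct_sub, smul_eq_mul, hsymm, dotProduct_comm c]
  ring

theorem IsMinOn.dotProduct_sub_mulVec_sub_nonneg {A : Matrix ι ι ℝ} (hA : A.IsHermitian)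
    {c p q : ι → ℝ} {S : Set (ι → ℝ)} (hS : Convex ℝ S) (hmin : IsMinOn (quadObjective A c) S p)
    (hp : p ∈ S) (hq : q ∈ S) : 0 ≤ (q - p) ⬝ᵥ (A *ᵥ p - c) := by
  refine nonneg_of_forall_add_mul_nonneg (b := (q - p) ⬝ᵥ A *ᵥ (q - p) / 2) fun t ht => ?_
  have hle := isMinOn_iff.1 hmin _ (hS.add_smul_sub_mem hp hq (Ioc_subset_Icc_self ht))
  rw [quadObjective_add_smul hA] at hle
  have : 0 ≤ t * ((q - p) ⬝ᵥ (A *ᵥ p - c) + t * ((q - p) ⬝ᵥ A *ᵥ (q - p) / 2)) := by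
    linarith
  exact nonneg_of_mul_nonneg_right this ht.1

theorem IsMinOn.dotProduct_sub_mulVec_sub_mulVec_nonpos {A B : Matrix ι ι ℝ}
    (hA : A.IsHermitian) (hB : B.IsHermitian) {c p p' : ι → ℝ} {S : Set (ι → ℝ)}
    (hS : Convex ℝ S) (hmin : IsMinOn (quadObjective A c) S p)
    (hmin' : IsMinOn (quadObjective B c) S p') (hp : p ∈ S) (hp' : p' ∈ S) :
    (p' - p) ⬝ᵥ (B *ᵥ p' - A *ᵥ p) ≤ 0 := by
  have h := hmin.dotProduct_sub_mulVec_sub_nonneg hA hS hp hp'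
  have h' := hmin'.dotProduct_sub_mulVec_sub_nonneg hB hS hp' hp
  rw [← neg_sub, neg_dotProduct] at h'
  rw [← sub_sub_sub_cancel_right (B *ᵥ p') (A *ᵥ p) c, dotProduct_sub]
  linarith

end QuadraticProgram

theorem convex_polyhedron {m n₁ n₂ : Type*} [Fintype m] (G : Matrix n₁ m ℝ) (g : n₁ → ℝ)
    (D : Matrix n₂ m ℝ) (d : n₂ → ℝ) :
    Convex ℝ {x | (∀ i, g i ≤ (G *ᵥ x) i) ∧ D *ᵥ x = d} := by
  rw [ofPred_and, ofPred_forall]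
  refine (convex_iInter fun i => ?_).inter ?_
  · exact convex_halfSpace_ge ((LinearMap.proj i).comp (mulVecLin G)).isLinear (g i)
  · exact (convex_singleton d).linear_preimage (mulVecLin D)

theorem dotProduct_mulVec_le_sqrt_mul {m n : Type*} [Fintype m] [Fintype n]
    (E : Matrix m n ℝ) (v : m → ℝ) (w : n → ℝ) :
    v ⬝ᵥ E *ᵥ w ≤ √(∑ i, ∑ j, E i j ^ 2) * (√(∑ i, v i ^ 2) * √(∑ j, w j ^ 2)) := by
  have hsum : v ⬝ᵥ E *ᵥ w = ∑ p : m × n, E p.1 p.2 * (v p.1 * w p.2) := by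
    simp only [dotProduct, mulVec, Fintype.sum_prod_type, Finset.mul_sum]
    exact Finset.sum_congr rfl fun i _ => Finset.sum_congr rfl fun j _ => by ring
  have hsq : ∑ p : m × n, (v p.1 * w p.2) ^ 2 = (∑ i, v i ^ 2) * ∑ j, w j ^ 2 := by
    simp only [Fintype.sum_prod_type, mul_pow, Finset.sum_mul_sum]
  rw [hsum, ← Real.sqrt_mul (by positivity)]
  simpa only [hsq, Fintype.sum_prod_type] using Real.sum_mul_le_sqrt_mul_sqrt Finset.univ
    (fun p : m × n => E p.1 p.2) (fun p => v p.1 * w p.2)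

theorem le_div_sub_mul_one_add_of_mul_sq_le {lam ε r s : ℝ} (hε : 0 ≤ ε) (hlt : ε < lam)
    (hr : 0 ≤ r) (hs : 0 ≤ s) (h : lam * r ^ 2 ≤ ε * (r * r) + ε * (r * s)) :
    r ≤ ε / (lam - ε) * (1 + s) := by
  rw [div_mul_eq_mul_div, le_div_iff₀ (sub_pos.2 hlt)]
  rcases hr.eq_or_lt with rfl | hr
  · rw [zero_mul]; positivity
  · have : r * (lam - ε) ≤ ε * s := le_of_mul_le_mul_left (by nlinarith) hr
    nlinarith

theorem stmt_8_general (M N₁ N₂ : ℕ)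
    (K K' : Matrix (Fin M) (Fin M) ℝ) (c : Fin M → ℝ)
    (G : Matrix (Fin N₁) (Fin M) ℝ) (g : Fin N₁ → ℝ)
    (D : Matrix (Fin N₂) (Fin M) ℝ) (d : Fin N₂ → ℝ)
    (hK : K.PosDef) (hK' : K'.PosDef)
    (lammin : ℝ)
    (hlam : ∀ v : Fin M → ℝ, lammin * ∑ i, v i ^ 2 ≤ dotProduct v (Matrix.mulVec K v))
    (ε' : ℝ) (hε' : Real.sqrt (∑ i, ∑ j, (K' i j - K i j) ^ 2) ≤ ε') (hε'lt : ε' < lammin)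
    (S : Set (Fin M → ℝ))
    (hS : S = {x | (∀ i, g i ≤ Matrix.mulVec G x i) ∧ Matrix.mulVec D x = d})
    (x₀ x₀' : Fin M → ℝ)
    (hx₀ : x₀ ∈ S ∧ ∀ x ∈ S,
      (1 / 2) * dotProduct x₀ (Matrix.mulVec K x₀) - dotProduct c x₀ ≤
      (1 / 2) * dotProduct x (Matrix.mulVec K x) - dotProduct c x)
    (hx₀' : x₀' ∈ S ∧ ∀ x ∈ S,
      (1 / 2) * dotProduct x₀' (Matrix.mulVec K' x₀') - dotProduct c x₀' ≤
      (1 / 2) * dotProduct x (Matrix.mulVec K' x) - dotProduct c x) :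
    Real.sqrt (∑ i, (x₀' i - x₀ i) ^ 2) ≤
      ε' / (lammin - ε') * (1 + Real.sqrt (∑ i, x₀ i ^ 2)) := by
  have hconvex : Convex ℝ S := hS ▸ convex_polyhedron G g D d
  have hopt := IsMinOn.dotProduct_sub_mulVec_sub_mulVec_nonpos hK.1 hK'.1 hconvex
    (isMinOn_iff.2 hx₀.2) (isMinOn_iff.2 hx₀'.2) hx₀.1 hx₀'.1
  set u := x₀' - x₀
  set r := √(∑ i, u i ^ 2)
  set s := √(∑ i, x₀ i ^ 2)
  set F := √(∑ i, ∑ j, (K - K') i j ^ 2)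
  have hsplit : K' *ᵥ x₀' - K *ᵥ x₀ = K *ᵥ u - (K - K') *ᵥ u - (K - K') *ᵥ x₀ := by
    rw [← add_sub_cancel x₀ x₀', mulVec_add, sub_mulVec, sub_mulVec]
    abel
  have hF : F ≤ ε' := by simpa only [F, Matrix.sub_apply, sub_sq_comm (K _ _)] using hε'
  have hε'_nonneg : 0 ≤ ε' := (Real.sqrt_nonneg _).trans hε'
  refine le_div_sub_mul_one_add_of_mul_sq_le hε'_nonneg hε'lt (Real.sqrt_nonneg _)
    (Real.sqrt_nonneg _) ?_
  calc lammin * r ^ 2 ≤ u ⬝ᵥ K *ᵥ u := by rw [Real.sq_sqrt (by positivity)]; exact hlam u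
    _ ≤ u ⬝ᵥ (K - K') *ᵥ u + u ⬝ᵥ (K - K') *ᵥ x₀ := by
      rw [hsplit, dotProduct_sub, dotProduct_sub] at hopt
      linarith
    _ ≤ F * (r * r) + F * (r * s) :=
      add_le_add (dotProduct_mulVec_le_sqrt_mul _ _ _) (dotProduct_mulVec_le_sqrt_mul _ _ _)
    _ ≤ ε' * (r * r) + ε' * (r * s) := by gcongr

/-- Daniel's perturbation lemma for quadratic programs: if K is
symmetric positive definite with smallest eigenvalue λmin > 0 and K' is a
symmetric positive definite perturbation with ‖K'−K‖_F ≤ ε' < λmin, then the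
minimizers over a fixed nonempty polyhedron satisfy
‖x₀'−x₀‖₂ ≤ ε'/(λmin−ε')·(1+‖x₀‖₂). -/
theorem stmt_8 (M N₁ N₂ : ℕ)
    (K K' : Matrix (Fin M) (Fin M) ℝ) (c : Fin M → ℝ)
    (G : Matrix (Fin N₁) (Fin M) ℝ) (g : Fin N₁ → ℝ)
    (D : Matrix (Fin N₂) (Fin M) ℝ) (d : Fin N₂ → ℝ)
    (hK : K.PosDef) (hK' : K'.PosDef)
    (lammin : ℝ) (hlampos : 0 < lammin)
    (hlam : ∀ v : Fin M → ℝ, lammin * ∑ i, v i ^ 2 ≤ dotProduct v (Matrix.mulVec K v))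
    (hlammin : ∃ v : Fin M → ℝ, v ≠ 0 ∧
      dotProduct v (Matrix.mulVec K v) = lammin * ∑ i, v i ^ 2)
    (ε' : ℝ) (hε' : Real.sqrt (∑ i, ∑ j, (K' i j - K i j) ^ 2) ≤ ε') (hε'lt : ε' < lammin)
    (S : Set (Fin M → ℝ))
    (hS : S = {x | (∀ i, g i ≤ Matrix.mulVec G x i) ∧ Matrix.mulVec D x = d})
    (x₀ x₀' : Fin M → ℝ)
    (hx₀ : x₀ ∈ S ∧ ∀ x ∈ S,
      (1 / 2) * dotProduct x₀ (Matrix.mulVec K x₀) - dotProduct c x₀ ≤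
      (1 / 2) * dotProduct x (Matrix.mulVec K x) - dotProduct c x)
    (hx₀' : x₀' ∈ S ∧ ∀ x ∈ S,
      (1 / 2) * dotProduct x₀' (Matrix.mulVec K' x₀') - dotProduct c x₀' ≤
      (1 / 2) * dotProduct x (Matrix.mulVec K' x) - dotProduct c x) :
    Real.sqrt (∑ i, (x₀' i - x₀ i) ^ 2) ≤
      ε' / (lammin - ε') * (1 + Real.sqrt (∑ i, x₀ i ^ 2)) :=
  stmt_8_general M N₁ N₂ K K' c G g D d hK hK' lammin hlam ε' hε' hε'lt S hS x₀ x₀' hx₀ hx₀'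
end
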